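/- Let (X,d) be a compact metric space without isolated points and let (X, f_{1,∞}) be a non-autonomous discrete system such that f_{1,∞} is feeble open, each f_n is surjective, (f_n) converges uniformly to a continuous map f : X → X, and the compositions (f_r^k) converge collectively to (f^k). Then the map f is transitive if and only if f_{1,∞} is transitive. -/

import Mathlib

open Set Filter

/-- `nds f i n` is the `n`-step composition `f_i^n = f (i+n-1) ∘ ⋯ ∘ f i`, with `nds f i 0 = id`. -/
def nds {X : Type*} (f : ℕ → X → X) (i : ℕ) : ℕ → X → X
  | 0 => id
  | n + 1 => f (i + n) ∘ nds f i n

section TopDefs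

variable {X : Type*} [TopologicalSpace X]

/-- The NDS `f_{1,∞}` is (topologically) transitive. -/
def NDSTransitive (f : ℕ → X → X) : Prop :=
  ∀ U V : Set X, IsOpen U → U.Nonempty → IsOpen V → V.Nonempty →
    ∃ n : ℕ, 0 < n ∧ (nds f 1 n '' U ∩ V).Nonempty

/-- The NDS `f_{1,∞}` is mixing. -/
def NDSMixing (f : ℕ → X → X) : Prop :=
  ∀ U V : Set X, IsOpen U → U.Nonempty → IsOpen V → V.Nonempty →
    ∃ N : ℕ, ∀ n : ℕ, N ≤ n → (nds f 1 n '' U ∩ V).Nonempty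

/-- The NDS `f_{1,∞}` is weakly mixing. -/
def NDSWeaklyMixing (f : ℕ → X → X) : Prop :=
  ∀ U₁ U₂ V₁ V₂ : Set X, IsOpen U₁ → U₁.Nonempty → IsOpen U₂ → U₂.Nonempty →
    IsOpen V₁ → V₁.Nonempty → IsOpen V₂ → V₂.Nonempty →
    ∃ n : ℕ, 0 < n ∧ (nds f 1 n '' U₁ ∩ V₁).Nonempty ∧ (nds f 1 n '' U₂ ∩ V₂).Nonempty

/-- The NDS `f_{1,∞}` is multi-transitive. -/
def NDSMultiTransitive (f : ℕ → X → X) : Prop :=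
  ∀ m : ℕ, 0 < m → ∀ U V : Fin m → Set X,
    (∀ j, IsOpen (U j)) → (∀ j, (U j).Nonempty) →
    (∀ j, IsOpen (V j)) → (∀ j, (V j).Nonempty) →
    ∃ l : ℕ, 0 < l ∧ ∀ j : Fin m, (nds f 1 (l * (j.1 + 1)) '' U j ∩ V j).Nonempty

/-- The NDS `f_{1,∞}` is totally transitive. -/
def NDSTotallyTransitive (f : ℕ → X → X) : Prop :=
  ∀ k : ℕ, 0 < k → ∀ U V : Set X, IsOpen U → U.Nonempty → IsOpen V → V.Nonempty →
    ∃ n : ℕ, 0 < n ∧ (nds f 1 (n * k) '' U ∩ V).Nonempty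

/-- The NDS `f_{1,∞}` is minimal: every orbit is dense. -/
def NDSMinimal (f : ℕ → X → X) : Prop :=
  ∀ x : X, Dense (Set.range fun n : ℕ => nds f 1 n x)

/-- The NDS `f_{1,∞}` is feeble open. -/
def FeebleOpen (f : ℕ → X → X) : Prop :=
  ∀ i : ℕ, 1 ≤ i → ∀ U : Set X, IsOpen U → U.Nonempty → (interior (f i '' U)).Nonempty

/-- A set of positive integers is syndetic (has bounded gaps). -/
def SyndeticSet (A : Set ℕ) : Prop :=
  ∃ M : ℕ, ∀ i : ℕ, 1 ≤ i → ∃ j ∈ A, i ≤ j ∧ j ≤ i + M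

/-- A set of positive integers is thick (contains arbitrarily long runs). -/
def ThickSet (A : Set ℕ) : Prop :=
  ∀ p : ℕ, ∃ n : ℕ, ∀ j : ℕ, n ≤ j → j ≤ n + p → j ∈ A

/-- The NDS `f_{1,∞}` is syndetically transitive. -/
def NDSSyndeticallyTransitive (f : ℕ → X → X) : Prop :=
  ∀ U V : Set X, IsOpen U → U.Nonempty → IsOpen V → V.Nonempty →
    SyndeticSet {n : ℕ | 0 < n ∧ (nds f 1 n '' U ∩ V).Nonempty}

/-- The NDS `f_{1,∞}` has dense periodic points. -/
def NDSDensePeriodicPoints (f : ℕ → X → X) : Prop :=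
  Dense {x : X | ∃ k : ℕ, 0 < k ∧ ∀ n : ℕ, 0 < n → nds f 1 (k * n) x = x}

/-- The NDS `f_{k,∞}` is strongly transitive. -/
def NDSStronglyTransitiveFrom (f : ℕ → X → X) (k : ℕ) : Prop :=
  ∀ U : Set X, IsOpen U → U.Nonempty →
    ∃ M : ℕ, 0 < M ∧ (⋃ i ∈ Set.Icc 1 M, nds f k i '' U) = Set.univ

/-- An autonomous map is transitive. -/
def MapTransitive {Y : Type*} [TopologicalSpace Y] (g : Y → Y) : Prop :=
  ∀ U V : Set Y, IsOpen U → U.Nonempty → IsOpen V → V.Nonempty →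
    ∃ n : ℕ, 0 < n ∧ (g^[n] '' U ∩ V).Nonempty

/-- An autonomous map is weakly mixing. -/
def MapWeaklyMixing {Y : Type*} [TopologicalSpace Y] (g : Y → Y) : Prop :=
  ∀ U₁ U₂ V₁ V₂ : Set Y, IsOpen U₁ → U₁.Nonempty → IsOpen U₂ → U₂.Nonempty →
    IsOpen V₁ → V₁.Nonempty → IsOpen V₂ → V₂.Nonempty →
    ∃ n : ℕ, 0 < n ∧ (g^[n] '' U₁ ∩ V₁).Nonempty ∧ (g^[n] '' U₂ ∩ V₂).Nonempty

/-- An autonomous map is totally transitive. -/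
def MapTotallyTransitive {Y : Type*} [TopologicalSpace Y] (g : Y → Y) : Prop :=
  ∀ k : ℕ, 0 < k → ∀ U V : Set Y, IsOpen U → U.Nonempty → IsOpen V → V.Nonempty →
    ∃ n : ℕ, 0 < n ∧ (g^[n * k] '' U ∩ V).Nonempty

/-- An autonomous map is syndetically transitive. -/
def MapSyndeticallyTransitive {Y : Type*} [TopologicalSpace Y] (g : Y → Y) : Prop :=
  ∀ U V : Set Y, IsOpen U → U.Nonempty → IsOpen V → V.Nonempty →
    SyndeticSet {n : ℕ | 0 < n ∧ (g^[n] '' U ∩ V).Nonempty}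

/-- An autonomous map is minimal. -/
def MapMinimal {Y : Type*} [TopologicalSpace Y] (g : Y → Y) : Prop :=
  ∀ x : Y, Dense (Set.range fun n : ℕ => g^[n] x)

end TopDefs

section MetricDefs

variable {X : Type*} [MetricSpace X]

/-- The compositions `(f_r^k)` converge collectively to `(f^k)` (w.r.t. the supremum metric). -/
def CollectivelyConverges (f : ℕ → X → X) (g : X → X) : Prop :=
  ∀ ε : ℝ, 0 < ε → ∃ r₀ : ℕ, ∀ r : ℕ, r₀ ≤ r → ∀ k : ℕ, 1 ≤ k → ∀ x : X,
    dist (nds f r k x) (g^[k] x) < ε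

/-- `N(U, δ)`: the times at which the NDS is `δ`-sensitive on `U`. -/
def SensSet (f : ℕ → X → X) (U : Set X) (δ : ℝ) : Set ℕ :=
  {n : ℕ | 0 < n ∧ ∃ x ∈ U, ∃ y ∈ U, δ < dist (nds f 1 n x) (nds f 1 n y)}

/-- The NDS `f_{1,∞}` is multi-sensitive. -/
def NDSMultiSensitive (f : ℕ → X → X) : Prop :=
  ∃ δ : ℝ, 0 < δ ∧ ∀ m : ℕ, 0 < m → ∀ U : Fin m → Set X,
    (∀ i, IsOpen (U i)) → (∀ i, (U i).Nonempty) → (⋂ i, SensSet f (U i) δ).Nonempty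

/-- The NDS `f_{1,∞}` is thickly sensitive. -/
def NDSThicklySensitive (f : ℕ → X → X) : Prop :=
  ∃ δ : ℝ, 0 < δ ∧ ∀ U : Set X, IsOpen U → U.Nonempty → ThickSet (SensSet f U δ)

/-- The NDS `f_{1,∞}` is syndetically sensitive. -/
def NDSSyndeticallySensitive (f : ℕ → X → X) : Prop :=
  ∃ δ : ℝ, 0 < δ ∧ ∀ U : Set X, IsOpen U → U.Nonempty → SyndeticSet (SensSet f U δ)

/-- The NDS `f_{1,∞}` is mildly mixing: its product with every transitive NDS on a compact
metric space is transitive. -/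
def NDSMildlyMixing (f : ℕ → X → X) : Prop :=
  ∀ (Y : Type*) [MetricSpace Y] [CompactSpace Y] (g : ℕ → Y → Y),
    (∀ n : ℕ, 1 ≤ n → Continuous (g n)) → NDSTransitive g →
    NDSTransitive (fun n (p : X × Y) => (f n p.1, g n p.2))

/-- The NDS `f_{1,∞}` is Li–Yorke chaotic. -/
def LiYorkeChaotic (f : ℕ → X → X) : Prop :=
  ∃ S : Set X, ¬S.Countable ∧ ∀ x ∈ S, ∀ y ∈ S, x ≠ y →
    Filter.liminf (fun n : ℕ => dist (nds f 1 n x) (nds f 1 n y)) Filter.atTop = 0 ∧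
    0 < Filter.limsup (fun n : ℕ => dist (nds f 1 n x) (nds f 1 n y)) Filter.atTop

end MetricDefs

/-!
Collective convergence makes every tail `f_r^k` of the system uniformly close to `F^k`,
simultaneously in `k`, once `r` is large, and `f_1^(m+k) = f_(m+1)^k ∘ f_1^m`. So transitivity
transfers between `F` and the system as soon as open sets can be moved across the first `m`
maps. Forwards, feeble openness gives an open set inside `f_1^m(U)`. Backwards, continuity and
surjectivity pull `U` back along `f_1^m`, and the lack of isolated points makes the transitivity
times of the system unbounded, so one of them exceeds `m`.
-/

open Function

section Compositions

variable {X : Type*} {f : ℕ → X → X}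

theorem nds_add (f : ℕ → X → X) (i m k : ℕ) : nds f i (m + k) = nds f (i + m) k ∘ nds f i m := by
  induction k with
  | zero => rfl
  | succ k ih =>
    change f (i + (m + k)) ∘ nds f i (m + k) = f (i + m + k) ∘ nds f (i + m) k ∘ nds f i m
    rw [ih, Nat.add_assoc]

theorem continuous_nds [TopologicalSpace X] {i : ℕ} (hcont : ∀ n, i ≤ n → Continuous (f n))
    (k : ℕ) : Continuous (nds f i k) := by
  induction k with
  | zero => exact continuous_id
  | succ k ih => exact (hcont (i + k) (Nat.le_add_right i k)).comp ih

theorem surjective_nds {i : ℕ} (hsurj : ∀ n, i ≤ n → Surjective (f n)) (k : ℕ) :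
    Surjective (nds f i k) := by
  induction k with
  | zero => exact surjective_id
  | succ k ih => exact (hsurj (i + k) (Nat.le_add_right i k)).comp ih

theorem FeebleOpen.exists_isOpen_subset_image_nds [TopologicalSpace X] (hfo : FeebleOpen f)
    {i : ℕ} (hi : 1 ≤ i) {U : Set X} (hU : IsOpen U) (hne : U.Nonempty) (k : ℕ) :
    ∃ W, IsOpen W ∧ W.Nonempty ∧ W ⊆ nds f i k '' U := by
  induction k with
  | zero => exact ⟨U, hU, hne, by simp [nds]⟩
  | succ k ih =>
    obtain ⟨W, hW, hWne, hWsub⟩ := ih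
    refine ⟨interior (f (i + k) '' W), isOpen_interior, hfo _ (by omega) W hW hWne, ?_⟩
    calc interior (f (i + k) '' W) ⊆ f (i + k) '' W := interior_subset
      _ ⊆ f (i + k) '' (nds f i k '' U) := image_mono hWsub
      _ = nds f i (k + 1) '' U := (image_comp _ _ _).symm

end Compositions

theorem IsOpen.exists_disjoint_subsets {X : Type*} [TopologicalSpace X] [T2Space X]
    (hX : ∀ x : X, ¬IsOpen ({x} : Set X)) {V : Set X} (hV : IsOpen V) (hne : V.Nonempty) :
    ∃ V₁ V₂, IsOpen V₁ ∧ V₁.Nonempty ∧ IsOpen V₂ ∧ V₂.Nonempty ∧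
      V₁ ⊆ V ∧ V₂ ⊆ V ∧ Disjoint V₁ V₂ := by
  obtain ⟨x, hx⟩ := hne
  obtain ⟨y, hy, hyx⟩ : ∃ y ∈ V, y ≠ x := by
    by_contra! h
    exact hX x (eq_singleton_iff_unique_mem.mpr ⟨hx, h⟩ ▸ hV)
  obtain ⟨Ox, Oy, hOx, hOy, hxOx, hyOy, hdisj⟩ := t2_separation hyx.symm
  exact ⟨V ∩ Ox, V ∩ Oy, hV.inter hOx, ⟨x, hx, hxOx⟩, hV.inter hOy, ⟨y, hy, hyOy⟩,
    inter_subset_left, inter_subset_left,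
    hdisj.mono inter_subset_right inter_subset_right⟩

theorem NDSTransitive.exists_gt {X : Type*} [TopologicalSpace X] [T2Space X]
    (hX : ∀ x : X, ¬IsOpen ({x} : Set X)) {f : ℕ → X → X}
    (hcont : ∀ n, 1 ≤ n → Continuous (f n)) (ht : NDSTransitive f) (r : ℕ) :
    ∀ U V : Set X, IsOpen U → U.Nonempty → IsOpen V → V.Nonempty →
      ∃ n, r < n ∧ (nds f 1 n '' U ∩ V).Nonempty := by
  induction r with
  | zero => exact ht
  | succ r ih =>
    intro U V hU hUne hV hVne
    obtain ⟨V₁, V₂, hV₁, hV₁ne, hV₂, hV₂ne, hV₁V, hV₂V, hdisj⟩ :=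
      hV.exists_disjoint_subsets hX hVne
    obtain ⟨n₁, hrn₁, hhit₁⟩ := ih U V₁ hU hUne hV₁ hV₁ne
    rcases (Nat.succ_le_of_lt hrn₁).eq_or_lt with rfl | hlt
    -- Hitting `V₂` from the part of `U` sent into `V₁` at time `r + 1` must happen at another time.
    · have hU₁ : IsOpen (U ∩ nds f 1 (r + 1) ⁻¹' V₁) :=
        hU.inter (hV₁.preimage (continuous_nds hcont _))
      have hU₁ne : (U ∩ nds f 1 (r + 1) ⁻¹' V₁).Nonempty := by
        obtain ⟨_, ⟨u, hu, rfl⟩, hu₁⟩ := hhit₁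
        exact ⟨u, hu, hu₁⟩
      obtain ⟨n₂, hrn₂, _, ⟨u, ⟨hu, hu₁⟩, rfl⟩, hu₂⟩ := ih _ V₂ hU₁ hU₁ne hV₂ hV₂ne
      have hn₂ : n₂ ≠ r + 1 := by
        rintro rfl
        exact hdisj.ne_of_mem hu₁ hu₂ rfl
      exact ⟨n₂, by omega, _, ⟨u, hu, rfl⟩, hV₂V hu₂⟩
    · exact ⟨n₁, hlt, hhit₁.mono (inter_subset_inter_right _ hV₁V)⟩

section Metric

variable {X : Type*} [MetricSpace X] {f : ℕ → X → X} {F : X → X}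

theorem CollectivelyConverges.exists_isOpen_shadow (hcoll : CollectivelyConverges f F)
    {V : Set X} (hV : IsOpen V) (hne : V.Nonempty) :
    ∃ W, IsOpen W ∧ W.Nonempty ∧ ∃ r₀, ∀ r, r₀ ≤ r → ∀ k, 1 ≤ k → ∀ x,
      (F^[k] x ∈ W → nds f r k x ∈ V) ∧ (nds f r k x ∈ W → F^[k] x ∈ V) := by
  obtain ⟨y, hy⟩ := hne
  obtain ⟨δ, hδ, hball⟩ := Metric.isOpen_iff.mp hV y hy
  obtain ⟨r₀, hr₀⟩ := hcoll (δ / 2) (half_pos hδ)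
  refine ⟨Metric.ball y (δ / 2), Metric.isOpen_ball, ⟨y, Metric.mem_ball_self (half_pos hδ)⟩,
    r₀, fun r hr k hk x => ⟨fun hx => hball ?_, fun hx => hball ?_⟩⟩
  · calc dist (nds f r k x) y ≤ dist (nds f r k x) (F^[k] x) + dist (F^[k] x) y :=
          dist_triangle _ _ _
      _ < δ / 2 + δ / 2 := add_lt_add (hr₀ r hr k hk x) hx
      _ = δ := add_halves δ
  · calc dist (F^[k] x) y ≤ dist (F^[k] x) (nds f r k x) + dist (nds f r k x) y :=
          dist_triangle _ _ _
      _ < δ / 2 + δ / 2 := add_lt_add (dist_comm (F^[k] x) _ ▸ hr₀ r hr k hk x) hx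
      _ = δ := add_halves δ

theorem MapTransitive.ndsTransitive (hfo : FeebleOpen f) (hcoll : CollectivelyConverges f F)
    (hF : MapTransitive F) : NDSTransitive f := by
  intro U V hU hUne hV hVne
  obtain ⟨W, hW, hWne, m, hm⟩ := hcoll.exists_isOpen_shadow hV hVne
  obtain ⟨U', hU', hU'ne, hU'sub⟩ := hfo.exists_isOpen_subset_image_nds le_rfl hU hUne m
  obtain ⟨k, hk, _, ⟨_, hu', rfl⟩, hkW⟩ := hF U' W hU' hU'ne hW hWne
  obtain ⟨u, hu, rfl⟩ := hU'sub hu'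
  refine ⟨m + k, by omega, _, ⟨u, hu, rfl⟩, ?_⟩
  rw [nds_add]
  exact (hm (1 + m) (by omega) k hk _).1 hkW

theorem NDSTransitive.mapTransitive (hX : ∀ x : X, ¬IsOpen ({x} : Set X))
    (hcont : ∀ n, 1 ≤ n → Continuous (f n)) (hsurj : ∀ n, 1 ≤ n → Surjective (f n))
    (hcoll : CollectivelyConverges f F) (ht : NDSTransitive f) : MapTransitive F := by
  intro U V hU hUne hV hVne
  obtain ⟨W, hW, hWne, m, hm⟩ := hcoll.exists_isOpen_shadow hV hVne
  obtain ⟨n, hmn, _, ⟨w, hw, rfl⟩, hnW⟩ := ht.exists_gt hX hcont m (nds f 1 m ⁻¹' U) W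
    (hU.preimage (continuous_nds hcont m)) (hUne.preimage (surjective_nds hsurj m)) hW hWne
  obtain ⟨k, rfl⟩ := Nat.exists_eq_add_of_lt hmn
  rw [Nat.add_assoc, nds_add] at hnW
  exact ⟨k + 1, k.succ_pos, _, ⟨_, hw, rfl⟩,
    (hm (1 + m) (by omega) (k + 1) (by omega) _).2 hnW⟩

end Metric

theorem transitive_iff_limit_transitive_general {X : Type*} [MetricSpace X]
    (hX : ∀ x : X, ¬IsOpen ({x} : Set X))
    (f : ℕ → X → X) (F : X → X)
    (hcont : ∀ n : ℕ, 1 ≤ n → Continuous (f n))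
    (hfo : FeebleOpen f)
    (hsurj : ∀ n : ℕ, 1 ≤ n → Function.Surjective (f n))
    (hcoll : CollectivelyConverges f F) :
    MapTransitive F ↔ NDSTransitive f :=
  ⟨fun hF => hF.ndsTransitive hfo hcoll, fun ht => ht.mapTransitive hX hcont hsurj hcoll⟩

theorem transitive_iff_limit_transitive {X : Type*} [MetricSpace X] [CompactSpace X]
    (hX : ∀ x : X, ¬IsOpen ({x} : Set X))
    (f : ℕ → X → X) (F : X → X)
    (hcont : ∀ n : ℕ, 1 ≤ n → Continuous (f n))
    (hfo : FeebleOpen f)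
    (hsurj : ∀ n : ℕ, 1 ≤ n → Function.Surjective (f n))
    (hF : Continuous F)
    (hunif : TendstoUniformly (fun n x => f n x) F Filter.atTop)
    (hcoll : CollectivelyConverges f F) :
    MapTransitive F ↔ NDSTransitive f :=
  transitive_iff_limit_transitive_general hX f F hcont hfo hsurj hcoll
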